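/- arXiv:2106.02132 — 6 statements merged into one kernel-verified Lean document; each statement's English description precedes it below -/
import Mathlib

section
/- Define polynomials q_n(y) by q_0 = 1 and q_{n+1}(y) = (y+2n) q_n(y) − n(n−1) q_{n-1}(y). Then q_n(y) = Σ_{k=1}^{n} C(n,k) · (n−1)!/(k−1)! · y^k for all n ≥ 1. -/
/-!
The right-hand side is the Lah polynomial `∑ L(n,k) y^k`, with `L(n,k) = C(n-1,k-1) n!/k!`.
Since the recurrence determines `q`, it suffices to check that these polynomials satisfy it.
Comparing coefficients of `y^(k+1)` and clearing the common factor `n!/k!`, this is the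
binomial identity `(n+1) C(n+2,k+1) + (n+1) C(n,k+1) = k C(n+1,k) + 2(n+1) C(n+1,k+1)`,
which follows from Pascal's rule and `(n+1) C(n,j) = (j+1) C(n+1,j+1)`.
-/

open Polynomial Finset
open scoped Nat

theorem lah_choose_identity (n k : ℕ) :
    (n + 1) * (n + 2).choose (k + 1) + (n + 1) * n.choose (k + 1) =
      k * (n + 1).choose k + 2 * (n + 1) * (n + 1).choose (k + 1) := by
  rcases k with _ | j
  · simp
    ring
  · have h := Nat.add_one_mul_choose_eq n j
    simp only [Nat.choose_succ_succ'] at h ⊢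
    linarith

noncomputable def lahPolynomial (n : ℕ) : ℚ[X] :=
  ∑ k ∈ Icc 1 n, C ((n.choose k : ℚ) * (n - 1)! / (k - 1)!) * X ^ k

/-- With `k / k!` in place of `1 / (k - 1)!` this also holds at `k = 0`, where `(k - 1)! = 1`. -/
theorem coeff_lahPolynomial (n k : ℕ) :
    (lahPolynomial n).coeff k = k * n.choose k * (n - 1)! / k ! := by
  simp only [lahPolynomial, finsetSum_coeff, coeff_C_mul_X_pow, Finset.sum_ite_eq]
  rcases k with _ | k
  · simp
  by_cases hk : k + 1 ≤ n
  · rw [if_pos (mem_Icc.2 ⟨by omega, hk⟩), Nat.factorial_succ]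
    push_cast
    field_simp
  · rw [if_neg (by simp; omega), Nat.choose_eq_zero_of_lt (by omega)]
    simp

theorem lahPolynomial_add_two (n : ℕ) :
    lahPolynomial (n + 2) = (X + C (2 * ((n : ℚ) + 1))) * lahPolynomial (n + 1) -
      C (((n : ℚ) + 1) * n) * lahPolynomial n := by
  ext k
  rcases k with _ | k
  · simp [coeff_lahPolynomial]
  have hn : (n : ℚ) * (n - 1)! * n.choose (k + 1) = n ! * n.choose (k + 1) := by
    rcases n with _ | n
    · simp
    · simp [Nat.factorial_succ]
  have h := lah_choose_identity n k
  simp only [coeff_sub, add_mul, coeff_add, coeff_X_mul, coeff_C_mul, coeff_lahPolynomial,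
    show n + 2 - 1 = n + 1 from rfl, Nat.add_sub_cancel, Nat.factorial_succ]
  qify at h
  push_cast at h ⊢
  field_simp
  linear_combination (n ! : ℚ) * h + (n + 1) * hn

/-- For the Laguerre-type polynomials defined by `q_0 = 1` and
`q_{n+1}(y) = (y + 2n) q_n(y) - n(n-1) q_{n-1}(y)`, we have the explicit formula
`q_n(y) = Σ_{k=1}^n C(n,k) (n-1)!/(k-1)! y^k` for `n ≥ 1`. -/
theorem laguerre_type_explicit (q : ℕ → Polynomial ℚ)
    (h0 : q 0 = 1)
    (hrec : ∀ n : ℕ,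
      q (n + 1) = (X + C (2 * (n : ℚ))) * q n - C ((n : ℚ) * ((n : ℚ) - 1)) * q (n - 1)) :
    ∀ n : ℕ, 1 ≤ n →
      q n = ∑ k ∈ Finset.Icc 1 n,
        C ((n.choose k : ℚ) * ((n - 1).factorial : ℚ) / ((k - 1).factorial : ℚ)) * X ^ k := by
  have hq : ∀ n, q (n + 1) = lahPolynomial (n + 1) ∧ q (n + 2) = lahPolynomial (n + 2) := by
    intro n
    induction n with
    | zero =>
      have hq₁ : q 1 = lahPolynomial 1 := by simp [hrec 0, h0, lahPolynomial]
      refine ⟨hq₁, ?_⟩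
      rw [hrec 1, lahPolynomial_add_two 0, hq₁]
      simp
    | succ n ih =>
      refine ⟨ih.2, ?_⟩
      rw [hrec (n + 2), show n + 2 - 1 = n + 1 from rfl, ih.1, ih.2, lahPolynomial_add_two (n + 1)]
      push_cast
      ring_nf
  intro n hn
  obtain ⟨m, rfl⟩ := Nat.exists_eq_add_of_le' hn
  exact (hq m).1
end

section
/- Define p_n(x) by p_0=1, p_1=x, and p_{n+1} = (2n−1) p_n + x^2 p_{n-1}. Then p_n(x) = Σ_{k=0}^{n-1} C(n+k−1, 2k) · (2k)!/(2^k k!) · x^{n−k} for all n ≥ 1. -/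
open Polynomial Finset Nat

/-!
Write `a(n, k) = (n+k-1)_{2k} / (2^k k!)` with the falling factorial `(y)_j = y (y-1) ⋯ (y-j+1)`;
this is the coefficient in the statement, since `C(y, 2k) (2k)! = (y)_{2k}`. Read as a polynomial
in `n`, it satisfies `a(n+2, k+1) = (2n+1) a(n+1, k) + a(n, k+1)`, which is the recurrence of the
`p_n` on the coefficient of `x^{n+1-k}`; because `(n+k-1)_{2k}` vanishes for `1 ≤ n ≤ k`, the
sums may be taken over any range containing `[0, n)`, so no boundary terms appear.
-/

section

variable {K : Type*} [Field K]

noncomputable def besselCoeff (x : K) (k : ℕ) : K :=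
  (descPochhammer K (2 * k)).eval (x + k - 1) / (2 ^ k * k !)

@[simp]
lemma besselCoeff_zero_right (x : K) : besselCoeff x 0 = 1 := by
  simp [besselCoeff]

lemma descPochhammer_add_two_eval (j : ℕ) (y : K) :
    (descPochhammer K (j + 2)).eval (y + 2) = (y + 2) * (y + 1) * (descPochhammer K j).eval y := by
  rw [add_comm j, ← descPochhammer_mul, eval_mul, eval_comp, eval_sub, eval_X, eval_natCast,
    descPochhammer_succ_eval, descPochhammer_one, eval_X]
  push_cast
  ring

lemma besselCoeff_add_two_succ [CharZero K] (x : K) (k : ℕ) :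
    besselCoeff (x + 2) (k + 1) = (2 * x + 1) * besselCoeff (x + 1) k + besselCoeff x (k + 1) := by
  obtain ⟨y, rfl⟩ : ∃ y, x = y - k := ⟨x + k, by ring⟩
  have hL : (descPochhammer K (2 * (k + 1))).eval (y + 2)
      = (y + 2) * (y + 1) * (descPochhammer K (2 * k)).eval y :=
    descPochhammer_add_two_eval (2 * k) y
  have hR : (descPochhammer K (2 * (k + 1))).eval y
      = (descPochhammer K (2 * k)).eval y * (y - 2 * k) * (y - (2 * k + 1)) := by
    rw [show 2 * (k + 1) = 2 * k + 1 + 1 by ring, descPochhammer_succ_eval, descPochhammer_succ_eval]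
    push_cast; ring
  have hk : (k ! : K) ≠ 0 := Nat.cast_ne_zero.2 (factorial_ne_zero k)
  unfold besselCoeff
  rw [show y - k + 2 + ((k + 1 : ℕ) : K) - 1 = y + 2 by push_cast; ring,
    show y - k + ((k + 1 : ℕ) : K) - 1 = y by push_cast; ring,
    show y - k + 1 + (k : K) - 1 = y by ring, hL, hR, factorial_succ]
  push_cast
  field_simp
  ring

lemma besselCoeff_natCast_eq_zero {n k : ℕ} (hn : 1 ≤ n) (hnk : n ≤ k) :
    besselCoeff (n : K) k = 0 := by
  have harg : (n : K) + k - 1 = ((n + k - 1 : ℕ) : K) := by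
    rw [Nat.cast_sub (by omega)]; push_cast; ring
  rw [besselCoeff, harg, descPochhammer_eval_coe_nat_of_lt (by omega), zero_div]

lemma cast_choose_mul_factorial_div [CharZero K] (n k : ℕ) (hn : 1 ≤ n) :
    ((n + k - 1).choose (2 * k) : K) * (2 * k)! / (2 ^ k * k !) = besselCoeff (n : K) k := by
  have h2k : ((2 * k)! : K) ≠ 0 := Nat.cast_ne_zero.2 (factorial_ne_zero _)
  rw [cast_choose_eq_descPochhammer_div, Nat.cast_sub (by omega), besselCoeff, div_mul_cancel₀ _ h2k]
  push_cast
  ring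

noncomputable def besselPoly (n : ℕ) : K[X] :=
  ∑ k ∈ range n, C (besselCoeff (n : K) k) * X ^ (n - k)

lemma sum_range_besselCoeff_eq_of_le {n N : ℕ} (hn : 1 ≤ n) (hN : n ≤ N) (f : ℕ → K[X]) :
    ∑ k ∈ range n, C (besselCoeff (n : K) k) * f k = ∑ k ∈ range N, C (besselCoeff (n : K) k) * f k := by
  refine sum_subset (range_subset_range.2 hN) fun k _ hk => ?_
  rw [besselCoeff_natCast_eq_zero hn (by simpa using hk), C_0, zero_mul]

lemma besselPoly_one : besselPoly 1 = (X : K[X]) := by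
  simp [besselPoly]

lemma besselPoly_two [CharZero K] : besselPoly 2 = (X ^ 2 + X : K[X]) := by
  have h : besselCoeff (2 : K) 1 = 1 := by
    norm_num [besselCoeff, descPochhammer_succ_eval]
  simp [besselPoly, sum_range_succ, h]

lemma X_sq_mul_besselPoly {n : ℕ} (hn : 1 ≤ n) :
    X ^ 2 * besselPoly n
      = ∑ k ∈ range (n + 1), C (besselCoeff (n : K) (k + 1)) * X ^ (n + 1 - k) + X ^ (n + 2) := by
  have hpow : ∀ k ∈ range n, X ^ 2 * (C (besselCoeff (n : K) k) * X ^ (n - k))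
      = C (besselCoeff (n : K) k) * X ^ (n + 2 - k) := fun k hk => by
    rw [show n + 2 - k = n - k + 2 by simp at hk; omega, pow_add]; ring
  rw [besselPoly, mul_sum, sum_congr rfl hpow,
    sum_range_besselCoeff_eq_of_le hn (Nat.le_add_right n 2), sum_range_succ']
  simp

lemma besselPoly_add_two [CharZero K] {n : ℕ} (hn : 1 ≤ n) :
    besselPoly (n + 2) = C (2 * (n : K) + 1) * besselPoly (n + 1) + X ^ 2 * besselPoly n := by
  have hterm : ∀ k ∈ range (n + 1),
      C (besselCoeff ((n + 2 : ℕ) : K) (k + 1)) * X ^ (n + 2 - (k + 1))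
        = C (2 * (n : K) + 1) * (C (besselCoeff ((n + 1 : ℕ) : K) k) * X ^ (n + 1 - k))
          + C (besselCoeff (n : K) (k + 1)) * X ^ (n + 1 - k) := fun k _ => by
    rw [show n + 2 - (k + 1) = n + 1 - k by omega]
    push_cast
    rw [besselCoeff_add_two_succ, C_add, C_mul]
    ring
  rw [besselPoly, sum_range_succ', sum_congr rfl hterm, sum_add_distrib, ← mul_sum,
    X_sq_mul_besselPoly hn, besselPoly]
  simp only [besselCoeff_zero_right, C_1, one_mul, Nat.sub_zero]
  ring

end

/-- For the Bessel-type polynomials defined by `p_0 = 1`, `p_1 = x`, and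
`p_{n+1} = (2n-1) p_n + x² p_{n-1}` (for `n ≥ 1`), we have the explicit formula
`p_n(x) = Σ_{k=0}^{n-1} C(n+k-1, 2k) (2k)!/(2^k k!) x^{n-k}` for `n ≥ 1`. -/
theorem bessel_type_explicit (p : ℕ → Polynomial ℚ)
    (h0 : p 0 = 1) (h1 : p 1 = X)
    (hrec : ∀ n : ℕ, 1 ≤ n →
      p (n + 1) = C (2 * (n : ℚ) - 1) * p n + X ^ 2 * p (n - 1)) :
    ∀ n : ℕ, 1 ≤ n →
      p n = ∑ k ∈ Finset.range n,
        C (((n + k - 1).choose (2 * k) : ℚ) *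
            ((2 * k).factorial : ℚ) / (2 ^ k * (k.factorial : ℚ))) * X ^ (n - k) := by
  intro n hn
  obtain ⟨m, rfl⟩ := Nat.exists_eq_add_of_le' hn
  simp only [cast_choose_mul_factorial_div (m + 1) _ hn]
  change p (m + 1) = besselPoly (m + 1)
  clear hn
  induction m using Nat.twoStepInduction with
  | zero => rw [h1, besselPoly_one]
  | one => rw [hrec 1 le_rfl, h0, h1, besselPoly_two]; norm_num; ring
  | more m ih₁ ih₂ =>
    rw [hrec (m + 2) (by omega), show m + 2 - 1 = m + 1 by omega, ih₁, ih₂,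
      besselPoly_add_two (n := m + 1) (by omega)]
    push_cast
    ring
end

section
/- For the operator Y on ℚ[x] with symbol x√(1+z²), one has Y² = x² + (xD)², i.e., for all polynomials f: Y²f = x²f + x·d/dx(x·df/dx). -/
open Polynomial

/-- The generalized binomial coefficient `C(1/2, k)` appearing in the binomial
series `√(1+z²) = Σ_k C(1/2,k) z^{2k}`. -/
def halfChoose (k : ℕ) : ℚ :=
  (∏ i ∈ Finset.range k, ((1 : ℚ) / 2 - i)) / (k.factorial : ℚ)

/-- The operator `Y = x √(1+D²)` on `ℚ[x]`: since `D^{2k} f = 0` for `2k > deg f`,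
the binomial series acts as a finite sum. -/
noncomputable def Yop (f : Polynomial ℚ) : Polynomial ℚ :=
  X * ∑ k ∈ Finset.range (f.natDegree + 1), halfChoose k • (derivative^[2 * k] f)

open Finset

lemma descPochhammer_eval_prod (r : ℚ) (m : ℕ) :
    (descPochhammer ℚ m).eval r = ∏ i ∈ range m, (r - i) := by
  induction m with
  | zero => simp
  | succ n ih => rw [descPochhammer_succ_right, prod_range_succ, ← ih]; simp

lemma nat_eval_eq (p q : ℚ[X]) (h : ∀ n : ℕ, p.eval (n : ℚ) = q.eval (n : ℚ)) : p = q := by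
  apply eq_of_infinite_eval_eq
  apply Set.Infinite.mono (s := Set.range ((↑) : ℕ → ℚ))
  · rintro x ⟨n, rfl⟩; exact h n
  · exact Set.infinite_range_of_injective Nat.cast_injective

lemma conv_half (m : ℕ) :
    ∑ p ∈ Finset.HasAntidiagonal.antidiagonal m, halfChoose p.1 * halfChoose p.2
      = (Nat.choose 1 m : ℚ) := by
  have key : (∑ p ∈ Finset.HasAntidiagonal.antidiagonal m,
        C (((p.1.factorial : ℚ) * p.2.factorial))⁻¹ *
          (descPochhammer ℚ p.1 * descPochhammer ℚ p.2))
      = C ((m.factorial : ℚ))⁻¹ * (descPochhammer ℚ m).comp (C 2 * X) := by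
    apply nat_eval_eq
    intro n
    rw [eval_finset_sum]
    have hterm : ∀ p ∈ Finset.HasAntidiagonal.antidiagonal m,
        eval (n : ℚ) (C (((p.1.factorial : ℚ) * p.2.factorial))⁻¹ *
          (descPochhammer ℚ p.1 * descPochhammer ℚ p.2))
        = (n.choose p.1 : ℚ) * (n.choose p.2 : ℚ) := by
      intro p _
      rw [eval_mul, eval_C, eval_mul, descPochhammer_eval_eq_descFactorial,
        descPochhammer_eval_eq_descFactorial,
        Nat.descFactorial_eq_factorial_mul_choose,
        Nat.descFactorial_eq_factorial_mul_choose]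
      have h1 : (p.1.factorial : ℚ) ≠ 0 := Nat.cast_ne_zero.mpr p.1.factorial_ne_zero
      have h2 : (p.2.factorial : ℚ) ≠ 0 := Nat.cast_ne_zero.mpr p.2.factorial_ne_zero
      push_cast
      field_simp
    rw [Finset.sum_congr rfl hterm, eval_mul, eval_C, eval_comp, eval_mul, eval_C, eval_X]
    have : (2 : ℚ) * n = ((n + n : ℕ) : ℚ) := by push_cast; ring
    rw [this, descPochhammer_eval_eq_descFactorial,
      Nat.descFactorial_eq_factorial_mul_choose, Nat.add_choose_eq]
    have hm : (m.factorial : ℚ) ≠ 0 := Nat.cast_ne_zero.mpr m.factorial_ne_zero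
    push_cast
    field_simp
  have := congrArg (eval ((1 : ℚ) / 2)) key
  rw [eval_finset_sum] at this
  have hterm : ∀ p ∈ Finset.HasAntidiagonal.antidiagonal m,
      eval ((1:ℚ)/2) (C (((p.1.factorial : ℚ) * p.2.factorial))⁻¹ *
          (descPochhammer ℚ p.1 * descPochhammer ℚ p.2))
      = halfChoose p.1 * halfChoose p.2 := by
    intro p _
    rw [eval_mul, eval_C, eval_mul, descPochhammer_eval_prod, descPochhammer_eval_prod,
      halfChoose, halfChoose]
    rw [inv_mul_eq_div, div_mul_div_comm]
  rw [Finset.sum_congr rfl hterm] at this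
  rw [this, eval_mul, eval_C, eval_comp, eval_mul, eval_C, eval_X]
  have : (2 : ℚ) * (1/2) = ((1 : ℕ) : ℚ) := by norm_num
  rw [this, descPochhammer_eval_eq_descFactorial, Nat.descFactorial_eq_factorial_mul_choose]
  have hm : (m.factorial : ℚ) ≠ 0 := Nat.cast_ne_zero.mpr m.factorial_ne_zero
  push_cast
  field_simp

lemma sum_even {M : Type*} [AddCommMonoid M] (g : ℕ → M) (n : ℕ)
    (h : ∀ k, ¬ 2 ∣ k → g k = 0) :
    ∑ k ∈ range n, g k = ∑ j ∈ range ((n + 1) / 2), g (2 * j) := by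
  rw [← Finset.sum_image (f := g) (g := fun j => 2 * j) (by intro x _ y _ h; simp only at h; omega)]
  apply (Finset.sum_subset ?_ ?_).symm
  · intro k hk
    simp only [Finset.mem_image, Finset.mem_range] at *
    obtain ⟨j, hj, rfl⟩ := hk; omega
  · intro k hk hk2
    apply h
    simp only [Finset.mem_image, Finset.mem_range] at *
    rintro ⟨c, rfl⟩
    exact hk2 ⟨c, by omega, by omega⟩

def cc (i : ℕ) : ℚ := if 2 ∣ i then halfChoose (i / 2) else 0

lemma conv_cc (n : ℕ) :
    ∑ p ∈ Finset.HasAntidiagonal.antidiagonal n, cc p.1 * cc p.2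
      = if n = 0 ∨ n = 2 then 1 else 0 := by
  rw [Finset.Nat.sum_antidiagonal_eq_sum_range_succ_mk]
  dsimp only
  rw [sum_even _ _ (fun k hk => by simp [cc, hk])]
  simp only [Nat.succ_eq_add_one]
  rcases Nat.even_or_odd n with ⟨m, rfl⟩ | ⟨m, rfl⟩
  · have hr : (m + m + 1 + 1) / 2 = m + 1 := by omega
    rw [hr]
    have : ∀ j ∈ range (m + 1), cc (2 * j) * cc (m + m - 2 * j)
        = halfChoose j * halfChoose (m - j) := by
      intro j hj
      simp only [Finset.mem_range] at hj
      have h1 : m + m - 2 * j = 2 * (m - j) := by omega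
      simp [cc, h1, Nat.mul_div_cancel_left _ (by norm_num : 0 < 2)]
    have hsum : ∑ j ∈ range (m + 1), halfChoose j * halfChoose (m - j)
        = (Nat.choose 1 m : ℚ) := by
      rw [← conv_half m, Finset.Nat.sum_antidiagonal_eq_sum_range_succ_mk]
    rw [Finset.sum_congr rfl this, hsum]
    rcases Nat.lt_or_ge m 2 with hm | hm
    · interval_cases m <;> norm_num
    · have h1 : Nat.choose 1 m = 0 := Nat.choose_eq_zero_of_lt (by omega)
      rw [h1, if_neg (by omega)]
      norm_num
  · have : ∀ j ∈ range ((2 * m + 1 + 1 + 1) / 2), cc (2 * j) * cc (2 * m + 1 - 2 * j) = 0 := by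
      intro j hj
      simp only [Finset.mem_range] at hj
      have : ¬ 2 ∣ (2 * m + 1 - 2 * j) := by omega
      simp [cc, this]
    rw [Finset.sum_congr rfl this, if_neg (by omega)]
    simp

noncomputable def Dend : Module.End ℚ (Polynomial ℚ) := Polynomial.derivative

lemma Dend_coe : ⇑Dend = ⇑(@Polynomial.derivative ℚ _) := rfl

lemma iterate_derivative_add' (n : ℕ) (p q : ℚ[X]) :
    derivative^[n] (p + q) = derivative^[n] p + derivative^[n] q := by
  have h := map_add (Dend ^ n) p q
  simpa only [Module.End.pow_apply, Dend_coe] using h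

lemma aeval_D_apply (Q f : ℚ[X]) :
    aeval Dend Q f = ∑ i ∈ range (Q.natDegree + 1), Q.coeff i • derivative^[i] f := by
  rw [aeval_eq_sum_range]
  rw [LinearMap.sum_apply]
  exact Finset.sum_congr rfl fun i _ => by
    rw [LinearMap.smul_apply, Module.End.pow_apply]; rfl

lemma aeval_D_vanish (Q f : ℚ[X]) (h : ∀ i ≤ f.natDegree, Q.coeff i = 0) :
    aeval Dend Q f = 0 := by
  rw [aeval_D_apply]
  apply Finset.sum_eq_zero
  intro i _
  rcases le_or_gt i f.natDegree with hi | hi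
  · rw [h i hi, zero_smul]
  · rw [iterate_derivative_eq_zero hi, smul_zero]

lemma aeval_D_congr (Q₁ Q₂ f : ℚ[X]) (h : ∀ i ≤ f.natDegree, Q₁.coeff i = Q₂.coeff i) :
    aeval Dend Q₁ f = aeval Dend Q₂ f := by
  have h2 := aeval_D_vanish (Q₁ - Q₂) f (fun i hi => by rw [coeff_sub, h i hi, sub_self])
  rw [map_sub, LinearMap.sub_apply, sub_eq_zero] at h2
  exact h2

noncomputable def sig (N : ℕ) : ℚ[X] := ∑ i ∈ range (2 * N), monomial i (cc i)

lemma coeff_sig (N j : ℕ) : (sig N).coeff j = if j < 2 * N then cc j else 0 := by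
  rw [sig, finset_sum_coeff]
  simp only [coeff_monomial]
  rw [Finset.sum_ite_eq' (range (2 * N)) j cc]
  simp [Finset.mem_range]

lemma aeval_monomial_D (n : ℕ) (a : ℚ) (f : ℚ[X]) :
    aeval Dend (monomial n a) f = a • derivative^[n] f := by
  rw [aeval_monomial, Module.End.mul_apply, Module.End.pow_apply,
    Module.algebraMap_end_apply]
  rfl

lemma aeval_sig (N : ℕ) (f : ℚ[X]) :
    aeval Dend (sig N) f = ∑ k ∈ range N, halfChoose k • derivative^[2 * k] f := by
  rw [sig, map_sum, LinearMap.sum_apply]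
  have h1 : ∀ i ∈ range (2 * N), (aeval Dend (monomial i (cc i))) f
      = cc i • derivative^[i] f := fun i _ => aeval_monomial_D i (cc i) f
  rw [Finset.sum_congr rfl h1]
  rw [sum_even (fun i => cc i • derivative^[i] f) (2 * N)
    (fun k hk => by simp [cc, hk])]
  have h2 : (2 * N + 1) / 2 = N := by omega
  rw [h2]
  exact Finset.sum_congr rfl fun j _ => by
    simp [cc, Nat.mul_div_cancel_left _ (by norm_num : 0 < 2)]

lemma Yop_eq (f : ℚ[X]) (N : ℕ) (h : f.natDegree < N) :
    Yop f = X * aeval Dend (sig N) f := by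
  rw [Yop, aeval_sig]
  congr 1
  apply Finset.sum_subset
  · intro k hk
    simp only [Finset.mem_range] at *
    omega
  · intro k _ hk2
    simp only [Finset.mem_range] at hk2
    rw [iterate_derivative_eq_zero (by omega), smul_zero]

lemma iterate_derivative_X_mul (m : ℕ) (p : ℚ[X]) :
    derivative^[m] (X * p) = X * derivative^[m] p + (m : ℚ) • derivative^[m - 1] p := by
  induction m generalizing p with
  | zero => simp
  | succ n ih =>
    rw [Function.iterate_succ_apply, derivative_mul, derivative_X, one_mul,
      iterate_derivative_add', ih (derivative p)]
    have hD : derivative^[n] (derivative p) = derivative^[n + 1] p :=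
      (Function.iterate_succ_apply derivative n p).symm
    cases n with
    | zero => simp; ring
    | succ k =>
      have hD2 : derivative^[k + 1 - 1] (derivative p) = derivative^[k + 1] p :=
        (Function.iterate_succ_apply derivative k p).symm
      rw [hD, hD2]
      simp only [Nat.add_sub_cancel]
      rw [smul_eq_C_mul, smul_eq_C_mul]
      have hC : ((k + 1 + 1 : ℕ) : ℚ) = ((k + 1 : ℕ) : ℚ) + 1 := by push_cast; ring
      rw [hC, C_add, C_1]
      ring

lemma aeval_D_X_mul (Q g : ℚ[X]) :
    aeval Dend Q (X * g) = X * aeval Dend Q g + aeval Dend (derivative Q) g := by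
  induction Q using Polynomial.induction_on' with
  | add p q hp hq =>
    rw [map_add, LinearMap.add_apply, LinearMap.add_apply, hp, hq, map_add, map_add,
      LinearMap.add_apply]
    ring
  | monomial n a =>
    rw [aeval_monomial_D, aeval_monomial_D, derivative_monomial, aeval_monomial_D,
      iterate_derivative_X_mul, smul_add, smul_smul, mul_smul_comm]

lemma coeff_sig_sq (N i : ℕ) (hi : i < 2 * N) :
    (sig N * sig N).coeff i = if i = 0 ∨ i = 2 then 1 else 0 := by
  rw [coeff_mul]
  have h : ∀ p ∈ Finset.HasAntidiagonal.antidiagonal i,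
      (sig N).coeff p.1 * (sig N).coeff p.2 = cc p.1 * cc p.2 := by
    intro p hp
    rw [Finset.HasAntidiagonal.mem_antidiagonal] at hp
    rw [coeff_sig, coeff_sig, if_pos (by omega), if_pos (by omega)]
  rw [Finset.sum_congr rfl h, conv_cc]

/-- `Y² = x² + (xD)²`: for every polynomial `f`,
`Y(Y f) = x² f + x (x f')'`. -/
theorem Yop_sq (f : Polynomial ℚ) :
    Yop (Yop f) = X ^ 2 * f + X * derivative (X * derivative f) := by
  set N := f.natDegree + 2 with hN
  have h1 : Yop f = X * aeval Dend (sig N) f := Yop_eq f N (by omega)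
  have hdg : (aeval Dend (sig N) f).natDegree ≤ f.natDegree := by
    rw [aeval_sig]
    apply natDegree_sum_le_of_forall_le
    intro k _
    exact le_trans (natDegree_smul_le _ _)
      (le_trans (natDegree_iterate_derivative f (2 * k)) (Nat.sub_le _ _))
  have hdeg : (Yop f).natDegree < N := by
    rw [h1]
    have := natDegree_mul_le (p := (X : ℚ[X])) (q := aeval Dend (sig N) f)
    rw [natDegree_X] at this
    omega
  have h2 : Yop (Yop f) = X * aeval Dend (sig N) (Yop f) := Yop_eq _ N hdeg
  rw [h2, h1, aeval_D_X_mul]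
  have hmul : ∀ Q₁ Q₂ : ℚ[X],
      aeval Dend Q₁ (aeval Dend Q₂ f) = aeval Dend (Q₁ * Q₂) f := by
    intro Q₁ Q₂
    have hm := map_mul (aeval (R := ℚ) Dend) Q₁ Q₂
    rw [hm, Module.End.mul_apply]
  rw [hmul, hmul]
  have hA : aeval Dend (sig N * sig N) f = aeval Dend ((1 : ℚ[X]) + X ^ 2) f := by
    apply aeval_D_congr
    intro i hi
    rw [coeff_sig_sq N i (by omega), coeff_add, coeff_one, coeff_X_pow]
    by_cases h0 : i = 0 <;> by_cases h2 : i = 2 <;> simp [h0, h2]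
  have hB : aeval Dend (derivative (sig N) * sig N) f = aeval Dend (X : ℚ[X]) f := by
    apply aeval_D_congr
    intro i hi
    have hder : derivative (sig N * sig N) = 2 * (derivative (sig N) * sig N) := by
      rw [derivative_mul]; ring
    have hco := congrArg (fun p => coeff p i) hder
    have h2co : coeff (2 * (derivative (sig N) * sig N)) i
        = 2 * coeff (derivative (sig N) * sig N) i := by
      rw [(map_ofNat C 2).symm, coeff_C_mul]
    rw [coeff_derivative, h2co, coeff_sig_sq N (i + 1) (by omega)] at hco
    rw [coeff_X]
    by_cases h : i = 1
    · subst h; norm_num at hco ⊢; linarith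
    · have hn : ¬(i + 1 = 0 ∨ i + 1 = 2) := by omega
      rw [if_neg hn] at hco
      rw [if_neg (by omega : ¬ 1 = i)]
      have : (0 : ℚ) < (i : ℚ) + 1 := by positivity
      nlinarith [hco]
  rw [hA, hB]
  have e1 : aeval Dend ((1 : ℚ[X]) + X ^ 2) f = f + derivative (derivative f) := by
    rw [map_add, LinearMap.add_apply, map_one, map_pow, aeval_X, Module.End.one_apply,
      Module.End.pow_apply]
    rfl
  have e2 : aeval Dend (X : ℚ[X]) f = derivative f := by rw [aeval_X]; rfl
  rw [e1, e2, derivative_mul, derivative_X]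
  ring
end

section
/- Define p_n(x) by p_0 = 1, p_1 = x, p_{n+1}(x) = x·p_n(x) + n(n−1)·p_{n-1}(x). Then Σ_n p_n(x) v^n/n! = ((1+v)/(1−v))^{x/2}, i.e., n!·[v^n] exp((x/2)·log((1+v)/(1−v))) = p_n(x), as an identity of formal power series over ℚ[x]. -/
open Polynomial

/-- Formal exponential `exp(f) = Σ_k f^k/k!` of a power series `f` with zero constant
term, over a `ℚ`-algebra. -/
noncomputable def expPS {A : Type*} [CommRing A] [Algebra ℚ A] (f : PowerSeries A) :
    PowerSeries A :=
  PowerSeries.mk fun n =>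
    ∑ k ∈ Finset.range (n + 1), (k.factorial : ℚ)⁻¹ • PowerSeries.coeff (R := A) n (f ^ k)

/-- The power series `(x/2) log((1+v)/(1-v)) = x Σ_{m odd} v^m/m` over `ℚ[x]`. -/
noncomputable def tanhSysArg : PowerSeries (Polynomial ℚ) :=
  PowerSeries.mk fun m => if Odd m then ((1 : ℚ) / m) • X else 0

/-!
Write `f = x·artanh v` for `tanhSysArg` and `E = exp f = Σ e_n v^n`. Identifying `expPS f` with Mathlib's
`exp` substituted into `f`, the chain rule gives `E' = f' E`, and `(1 - v²) f' = x`, so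
`(1 - v²) E' = x E`. Comparing coefficients of `v^(n+1)` gives
`(n + 2) e_{n+2} = x e_{n+1} + n e_n`, which after multiplying by `(n + 1)!` is the recurrence of
`p` for `n! e_n`; the initial values agree, so `p n = n! e_n`.
-/

open scoped Nat

namespace PowerSeries

variable {A : Type*} [CommRing A] [Algebra ℚ A]

theorem coeff_zero_expPS (f : A⟦X⟧) : coeff 0 (expPS f) = 1 := by
  simp [expPS]

theorem expPS_eq_subst_exp {f : A⟦X⟧} (hf : constantCoeff f = 0) :
    expPS f = (exp A).subst f := by
  ext n
  have hsupp : (Function.support fun d => coeff d (exp A) • coeff n (f ^ d)) ⊆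
      ↑(Finset.range (n + 1)) := by
    refine Function.support_subset_iff'.mpr fun d hd => ?_
    have hnd : n < d := by simpa using hd
    rw [X_pow_dvd_iff.mp (pow_dvd_pow_of_dvd (X_dvd_iff.mpr hf) d) n hnd, smul_zero]
  rw [coeff_subst' (HasSubst.of_constantCoeff_zero' hf), finsum_eq_sum_of_support_subset _ hsupp,
    expPS, coeff_mk]
  refine Finset.sum_congr rfl fun d _ => ?_
  rw [coeff_exp, smul_eq_mul, ← Algebra.smul_def, one_div]

theorem derivative_expPS {f : A⟦X⟧} (hf : constantCoeff f = 0) :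
    d⁄dX A (expPS f) = expPS f * d⁄dX A f := by
  rw [expPS_eq_subst_exp hf, derivative_subst (HasSubst.of_constantCoeff_zero' hf),
    derivative_exp]

section LinearODE

variable {R : Type*} [CommRing R] {F : R⟦X⟧} {a : R}

theorem coeff_one_of_ode (h : (1 - X ^ 2) * d⁄dX R F = C a * F) :
    coeff 1 F = a * coeff 0 F := by
  have h0 := congrArg (coeff 0) h
  rw [sub_mul, one_mul, map_sub, coeff_X_pow_mul', if_neg (by omega), coeff_C_mul,
    coeff_derivative] at h0
  simpa using h0

theorem coeff_add_two_of_ode (h : (1 - X ^ 2) * d⁄dX R F = C a * F) (n : ℕ) :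
    (n + 2 : R) * coeff (n + 2) F = a * coeff (n + 1) F + n * coeff n F := by
  have hn := congrArg (coeff (n + 1)) h
  rw [sub_mul, one_mul, map_sub, coeff_X_pow_mul', coeff_C_mul, coeff_derivative] at hn
  rcases n with _ | n
  · rw [if_neg (by omega)] at hn
    push_cast at hn ⊢
    linear_combination hn
  · rw [if_pos (by omega), show n + 1 + 1 - 2 = n by omega, coeff_derivative] at hn
    push_cast at hn ⊢
    linear_combination hn

theorem factorial_mul_coeff_add_two_of_ode (h : (1 - X ^ 2) * d⁄dX R F = C a * F) (n : ℕ) :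
    ((n + 2)! : R) * coeff (n + 2) F =
      a * ((n + 1)! * coeff (n + 1) F) + (n + 1) * n * (n ! * coeff n F) := by
  rw [Nat.factorial_succ (n + 1), Nat.factorial_succ n]
  push_cast
  linear_combination ((n + 1) * n ! : R) * coeff_add_two_of_ode h n

end LinearODE

theorem constantCoeff_tanhSysArg : constantCoeff tanhSysArg = 0 := by
  simp [tanhSysArg, ← coeff_zero_eq_constantCoeff_apply]

theorem coeff_derivative_tanhSysArg (n : ℕ) :
    coeff n (d⁄dX ℚ[X] tanhSysArg) = if Even n then Polynomial.X else 0 := by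
  rw [coeff_derivative, tanhSysArg, coeff_mk]
  by_cases hn : Even n
  · rw [if_pos hn.add_one, if_pos hn, mul_comm, ← Nat.cast_add_one, ← nsmul_eq_mul,
      ← Nat.cast_smul_eq_nsmul ℚ, smul_smul, mul_one_div_cancel (by positivity), one_smul]
  · rw [if_neg (by simpa [Nat.even_add_one] using hn), if_neg hn, zero_mul]

theorem one_sub_X_sq_mul_derivative_tanhSysArg :
    (1 - X ^ 2) * d⁄dX ℚ[X] tanhSysArg = C Polynomial.X := by
  ext n : 1
  rw [sub_mul, one_mul, map_sub, coeff_X_pow_mul', coeff_C, coeff_derivative_tanhSysArg]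
  rcases n with _ | _ | n <;> simp [coeff_derivative_tanhSysArg, Nat.even_add_one]

theorem expPS_tanhSysArg_ode :
    (1 - X ^ 2) * d⁄dX ℚ[X] (expPS tanhSysArg) = C Polynomial.X * expPS tanhSysArg := by
  rw [derivative_expPS constantCoeff_tanhSysArg, mul_left_comm,
    one_sub_X_sq_mul_derivative_tanhSysArg, mul_comm]

end PowerSeries

/-- For `p_0 = 1`, `p_1 = x`, `p_{n+1} = x p_n + n(n-1) p_{n-1}` (for `n ≥ 1`),
the exponential generating function is `Σ_n p_n(x) v^n/n! = ((1+v)/(1-v))^{x/2}`. -/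
theorem tanh_system_egf (p : ℕ → Polynomial ℚ)
    (h0 : p 0 = 1) (h1 : p 1 = X)
    (hrec : ∀ n : ℕ, 1 ≤ n →
      p (n + 1) = X * p n + C ((n : ℚ) * ((n : ℚ) - 1)) * p (n - 1)) :
    (PowerSeries.mk fun n => (n.factorial : ℚ)⁻¹ • p n) = expPS tanhSysArg := by
  have hE := PowerSeries.expPS_tanhSysArg_ode
  have hp : ∀ n, p n = (n ! : ℚ[X]) * PowerSeries.coeff n (expPS tanhSysArg) ∧
      p (n + 1) = ((n + 1)! : ℚ[X]) * PowerSeries.coeff (n + 1) (expPS tanhSysArg) := by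
    intro n
    induction n with
    | zero => simp [h0, h1, PowerSeries.coeff_one_of_ode hE, PowerSeries.coeff_zero_expPS]
    | succ n ih =>
      refine ⟨ih.2, ?_⟩
      rw [hrec (n + 1) (Nat.le_add_left 1 n), Nat.add_sub_cancel, ih.1, ih.2,
        PowerSeries.factorial_mul_coeff_add_two_of_ode hE]
      simp
  ext n
  rw [PowerSeries.coeff_mk, (hp n).1, ← nsmul_eq_mul, ← Nat.cast_smul_eq_nsmul ℚ,
    inv_smul_smul₀ (by positivity)]
end

section
/- If V is a formal power series over ℚ with V(0)=0 and V'(0) invertible, with compositional inverse Z, then the coefficient matrices P and Q defined by Z(v)^k/k! = Σ_n p_{nk} v^n/n! and V(z)^k/k! = Σ_n q_{nk} z^n/n! are mutually inverse: Σ_m q_{nm} p_{mk} = δ_{nk}. -/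
open PowerSeries

/-!
Substituting `V` into `Z^k/k!` gives `(Z ∘ V)^k/k! = v^k/k!`, because substitution of a series
without constant term is a ring homomorphism. Reading off the coefficient of `v^n/n!`
expresses it as `Σ_m q_{nm} p_{mk}`.
-/

/-- Composition `f(g(v))` of formal power series over `ℚ`, for `g` with zero
constant term (so that the coefficient of `v^n` only involves `k ≤ n`). -/
noncomputable def compPS (f g : PowerSeries ℚ) : PowerSeries ℚ :=
  PowerSeries.mk fun n =>
    ∑ k ∈ Finset.range (n + 1), PowerSeries.coeff (R := ℚ) k f * PowerSeries.coeff (R := ℚ) n (g ^ k)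

/-- The coefficient matrix `p_{nk} = n! [v^n](Z^k/k!)`. -/
noncomputable def coeffMatrix (Z : PowerSeries ℚ) (n k : ℕ) : ℚ :=
  (n.factorial : ℚ) * PowerSeries.coeff (R := ℚ) n (Z ^ k) / (k.factorial : ℚ)

theorem PowerSeries.coeff_pow_eq_zero_of_lt {R : Type*} [CommSemiring R] {g : R⟦X⟧}
    (hg : constantCoeff g = 0) {n k : ℕ} (h : n < k) : coeff n (g ^ k) = 0 :=
  X_pow_dvd_iff.mp (pow_dvd_pow_of_dvd (X_dvd_iff.mpr hg) k) n h

theorem compPS_eq_subst {g : ℚ⟦X⟧} (hg : constantCoeff g = 0) (f : ℚ⟦X⟧) :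
    compPS f g = f.subst g := by
  ext n
  rw [coeff_subst' (HasSubst.of_constantCoeff_zero' hg), compPS, coeff_mk,
    finsum_eq_sum_of_support_subset _ (s := Finset.range (n + 1))]
  · simp only [smul_eq_mul]
  · intro d hd
    by_contra hdn
    simp only [Finset.coe_range, Set.mem_Iio, not_lt] at hdn
    exact hd (by simp [coeff_pow_eq_zero_of_lt hg (Nat.lt_of_succ_le hdn)])

theorem compPS_pow {g : ℚ⟦X⟧} (hg : constantCoeff g = 0) (f : ℚ⟦X⟧) (k : ℕ) :
    compPS (f ^ k) g = compPS f g ^ k := by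
  simp only [compPS_eq_subst hg, subst_pow (HasSubst.of_constantCoeff_zero' hg)]

theorem sum_coeffMatrix_mul_coeffMatrix (V Z : ℚ⟦X⟧) (n k : ℕ) :
    ∑ m ∈ Finset.range (n + 1), coeffMatrix V n m * coeffMatrix Z m k
      = n.factorial / k.factorial * coeff n (compPS (Z ^ k) V) := by
  rw [compPS, coeff_mk, Finset.mul_sum]
  refine Finset.sum_congr rfl fun m _ => ?_
  have hm : (m.factorial : ℚ) ≠ 0 := by positivity
  simp only [coeffMatrix]
  field_simp

theorem coeffMatrix_inverse_general (V Z : PowerSeries ℚ)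
    (hV0 : PowerSeries.constantCoeff (R := ℚ) V = 0)
    (hZV : compPS Z V = PowerSeries.X) :
    ∀ n k : ℕ,
      ∑ m ∈ Finset.range (n + 1), coeffMatrix V n m * coeffMatrix Z m k
        = if n = k then 1 else 0 := by
  intro n k
  rw [sum_coeffMatrix_mul_coeffMatrix, compPS_pow hV0, hZV, coeff_X_pow]
  split_ifs with h
  · subst h
    simp [n.factorial_ne_zero]
  · simp

/-- For a formal power series `V` with `V(0) = 0` and `V'(0)` invertible, with
compositional inverse `Z`, the coefficient matrices `P` and `Q` of `Z` and `V` are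
mutually inverse: `Σ_m q_{nm} p_{mk} = δ_{nk}`. -/
theorem coeffMatrix_inverse (V Z : PowerSeries ℚ)
    (hV0 : PowerSeries.constantCoeff (R := ℚ) V = 0)
    (hZ0 : PowerSeries.constantCoeff (R := ℚ) Z = 0)
    (hV1 : PowerSeries.coeff (R := ℚ) 1 V ≠ 0)
    (hVZ : compPS V Z = PowerSeries.X)
    (hZV : compPS Z V = PowerSeries.X) :
    ∀ n k : ℕ,
      ∑ m ∈ Finset.range (n + 1), coeffMatrix V n m * coeffMatrix Z m k
        = if n = k then 1 else 0 :=
  coeffMatrix_inverse_general V Z hV0 hZV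
end

section
/- The tanh-system polynomials q_n(y) with EGF exp(y·tanh z) arise as Poisson subordination of Laguerre-type polynomials: q_n(y) = Σ_m S(n,m) 2^{n−m} L_m(y), where L_m(y) = Σ_{k=1}^{m} C(m,k)·(−1)^{m−k}·(m−1)!/(k−1)!·y^k (L_0 = 1) are the polynomials with EGF exp(y·v/(1+v)). -/
/-- The formal power series `sinh z = Σ_{n odd} z^n/n!` over `ℚ`. -/
noncomputable def sinhPS : PowerSeries ℚ :=
  PowerSeries.mk fun n => if Odd n then (n.factorial : ℚ)⁻¹ else 0

/-- The formal power series `cosh z = Σ_{n even} z^n/n!` over `ℚ`. -/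
noncomputable def coshPS : PowerSeries ℚ :=
  PowerSeries.mk fun n => if Even n then (n.factorial : ℚ)⁻¹ else 0

/-- Stirling numbers of the second kind. -/
def stirlingSecond : ℕ → ℕ → ℚ
  | 0, 0 => 1
  | 0, _ + 1 => 0
  | _ + 1, 0 => 0
  | n + 1, k + 1 => stirlingSecond n k + (k + 1) * stirlingSecond n (k + 1)

/-- The Laguerre-type polynomials `L_m(y) = Σ_{k=1}^m C(m,k) (-1)^{m-k} (m-1)!/(k-1)! y^k`
(`L_0 = 1`), with exponential generating function `exp(y v/(1+v))`. -/
noncomputable def laguerreL (m : ℕ) : Polynomial ℚ :=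
  if m = 0 then 1 else
    ∑ k ∈ Finset.Icc 1 m,
      Polynomial.C ((m.choose k : ℚ) * (-1) ^ (m - k) *
          ((m - 1).factorial : ℚ) / ((k - 1).factorial : ℚ)) * Polynomial.X ^ k

/-!
Both sides satisfy `q₀ = 1` and `q_{n+1} = y (q_n - q_n'')`. On the left this is the equation
`∂_z exp(y T) = y (1 - T²) exp(y T) = y (1 - ∂_y²) exp(y T)`, which holds because `T' = 1 - T²`.
On the right, the Stirling recurrence reduces it to `y (L_m - L_m'') = L_{m+1} + 2 m L_m`.
Both sides of that identity solve `y p'' - y p' + (m + 1) p = 0`, whose polynomial solutions are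
determined by their coefficient of `y`.
-/

section TanhSeries

open PowerSeries

theorem derivative_coshPS : d⁄dX ℚ coshPS = sinhPS := by
  ext n
  have hfact : ((n + 1).factorial : ℚ)⁻¹ * (n + 1) = (n.factorial : ℚ)⁻¹ := by
    rw [Nat.factorial_succ]; push_cast; field_simp
  simp only [coeff_derivative, coshPS, sinhPS, coeff_mk, Nat.even_add_one, Nat.not_even_iff_odd]
  split_ifs <;> simp [hfact]

theorem derivative_sinhPS : d⁄dX ℚ sinhPS = coshPS := by
  ext n
  have hfact : ((n + 1).factorial : ℚ)⁻¹ * (n + 1) = (n.factorial : ℚ)⁻¹ := by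
    rw [Nat.factorial_succ]; push_cast; field_simp
  simp only [coeff_derivative, coshPS, sinhPS, coeff_mk, Nat.odd_add_one, Nat.not_odd_iff_even]
  split_ifs <;> simp [hfact]

theorem constantCoeff_coshPS : constantCoeff coshPS = 1 := by
  simp [← coeff_zero_eq_constantCoeff_apply, coshPS]

theorem constantCoeff_sinhPS : constantCoeff sinhPS = 0 := by
  simp [← coeff_zero_eq_constantCoeff_apply, sinhPS]

variable {T : ℚ⟦X⟧}

theorem constantCoeff_eq_zero_of_coshPS_mul_eq (hT : coshPS * T = sinhPS) :
    constantCoeff T = 0 := by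
  simpa [constantCoeff_coshPS, constantCoeff_sinhPS] using congrArg constantCoeff hT

theorem derivative_eq_one_sub_sq_of_coshPS_mul_eq (hT : coshPS * T = sinhPS) :
    d⁄dX ℚ T = 1 - T ^ 2 := by
  have hcosh : coshPS ≠ 0 := fun h => by simpa [h] using constantCoeff_coshPS
  have hderiv := congrArg (d⁄dX ℚ) hT
  rw [Derivation.leibniz, derivative_sinhPS, derivative_coshPS, smul_eq_mul, smul_eq_mul] at hderiv
  refine mul_left_cancel₀ hcosh ?_
  linear_combination hderiv + T * hT

theorem succ_mul_coeff_succ_pow_succ {R : Type*} [CommRing R] {T : R⟦X⟧}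
    (hT' : d⁄dX R T = 1 - T ^ 2) (n j : ℕ) :
    (n + 1) * coeff (n + 1) (T ^ (j + 1))
      = (j + 1) * (coeff n (T ^ j) - coeff n (T ^ (j + 2))) := by
  have h := congrArg (coeff n) (Derivation.leibniz_pow (d⁄dX R) T (j + 1))
  rw [coeff_derivative, hT', smul_eq_mul, Nat.add_sub_cancel,
    show T ^ j * (1 - T ^ 2) = T ^ j - T ^ (j + 2) by ring, map_nsmul, map_sub, nsmul_eq_mul] at h
  push_cast at h
  linear_combination h

end TanhSeries

section Operators

open Polynomial

noncomputable def tanhStep : ℚ[X] →ₗ[ℚ] ℚ[X] :=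
  LinearMap.mulLeft ℚ X ∘ₗ (LinearMap.id - derivative ∘ₗ derivative)

theorem tanhStep_apply (p : ℚ[X]) : tanhStep p = X * (p - derivative (derivative p)) := rfl

theorem coeff_tanhStep_succ (p : ℚ[X]) (j : ℕ) :
    (tanhStep p).coeff (j + 1) = p.coeff j - (j + 1) * (j + 2) * p.coeff (j + 2) := by
  rw [tanhStep_apply, coeff_X_mul, coeff_sub, coeff_derivative, coeff_derivative]
  push_cast
  ring

noncomputable def laguerreOp (m : ℕ) : ℚ[X] →ₗ[ℚ] ℚ[X] :=
  LinearMap.mulLeft ℚ X ∘ₗ (derivative ∘ₗ derivative - derivative) + (m : ℚ) • LinearMap.id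

theorem laguerreOp_apply (m : ℕ) (p : ℚ[X]) :
    laguerreOp m p = X * (derivative (derivative p) - derivative p) + (m : ℚ) • p := rfl

theorem coeff_laguerreOp_zero (m : ℕ) (p : ℚ[X]) :
    (laguerreOp m p).coeff 0 = m * p.coeff 0 := by
  simp [laguerreOp_apply]

theorem coeff_laguerreOp_succ (m : ℕ) (p : ℚ[X]) (k : ℕ) :
    (laguerreOp m p).coeff (k + 1)
      = (k + 1) * (k + 2) * p.coeff (k + 2) + (m - (k + 1)) * p.coeff (k + 1) := by
  rw [laguerreOp_apply, coeff_add, coeff_X_mul, coeff_sub, coeff_derivative, coeff_derivative,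
    coeff_derivative, coeff_smul, smul_eq_mul]
  push_cast
  ring

theorem eq_zero_of_laguerreOp_eq_zero {m : ℕ} (hm : m ≠ 0) {p : ℚ[X]}
    (hp : laguerreOp m p = 0) (h1 : p.coeff 1 = 0) : p = 0 := by
  have hsucc : ∀ k, p.coeff (k + 1) = 0 := by
    intro k
    induction k with
    | zero => exact h1
    | succ k ih =>
      have h := coeff_laguerreOp_succ m p k
      rw [hp, coeff_zero, ih, mul_zero, add_zero] at h
      have : ((k : ℚ) + 1) * (k + 2) ≠ 0 := by positivity
      exact (mul_eq_zero.mp h.symm).resolve_left this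
  ext k
  rcases k with _ | k
  · have h := coeff_laguerreOp_zero m p
    rw [hp, coeff_zero] at h
    simpa [hm] using h.symm
  · exact hsucc k

theorem laguerreOp_succ_tanhStep_sub (m : ℕ) (p : ℚ[X]) :
    laguerreOp (m + 1) (tanhStep p - (2 * m : ℚ) • p)
      = tanhStep (laguerreOp m p) - (2 * (m + 1) : ℚ) • laguerreOp m p := by
  simp only [laguerreOp_apply, tanhStep_apply, smul_eq_C_mul, derivative_mul, derivative_X,
    derivative_sub, derivative_add, derivative_C, derivative_one, zero_mul, zero_add]
  push_cast
  simp only [map_add, map_mul, map_natCast, map_ofNat, C_1]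
  ring

end Operators

section ExpPoly

noncomputable def egfExpPoly (T : PowerSeries ℚ) (n : ℕ) : Polynomial ℚ :=
  (n.factorial : ℚ) • PowerSeries.coeff n
    (expPS (PowerSeries.C Polynomial.X * PowerSeries.map (Polynomial.C : ℚ →+* Polynomial ℚ) T))

variable {T : PowerSeries ℚ} (hT0 : PowerSeries.constantCoeff T = 0)
include hT0

theorem coeff_egfExpPoly (n j : ℕ) :
    (egfExpPoly T n).coeff j = n.factorial / j.factorial * PowerSeries.coeff n (T ^ j) := by
  simp only [egfExpPoly, expPS, PowerSeries.coeff_mk, mul_pow, ← map_pow, PowerSeries.coeff_C_mul,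
    PowerSeries.coeff_map, Polynomial.X_pow_mul_C, Polynomial.C_mul_X_pow_eq_monomial,
    Polynomial.coeff_smul, Polynomial.finsetSum_coeff, Polynomial.coeff_monomial, smul_eq_mul,
    mul_ite, mul_zero, Finset.sum_ite_eq', Finset.mem_range]
  split_ifs with hj
  · ring
  · have hord : (n : ℕ∞) < (T ^ j).order :=
      lt_of_lt_of_le (by exact_mod_cast (show n < j by omega))
        (PowerSeries.le_order_pow_of_constantCoeff_eq_zero j hT0)
    rw [PowerSeries.coeff_of_lt_order n hord, mul_zero]

theorem egfExpPoly_zero : egfExpPoly T 0 = 1 := by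
  ext j
  rw [coeff_egfExpPoly hT0]
  rcases j with _ | j
  · simp
  · simp [PowerSeries.coeff_zero_eq_constantCoeff, hT0, Polynomial.coeff_one]

open PowerSeries in
theorem egfExpPoly_succ (hT' : d⁄dX ℚ T = 1 - T ^ 2) (n : ℕ) :
    egfExpPoly T (n + 1) = tanhStep (egfExpPoly T n) := by
  ext j
  rcases j with _ | j
  · simp [coeff_egfExpPoly hT0, tanhStep_apply, coeff_one]
  rw [coeff_tanhStep_succ, coeff_egfExpPoly hT0, coeff_egfExpPoly hT0, coeff_egfExpPoly hT0,
    Nat.factorial_succ n, Nat.factorial_succ j, Nat.factorial_succ (j + 1), Nat.factorial_succ j]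
  push_cast
  field_simp
  linear_combination ((j : ℚ) + 2) * succ_mul_coeff_succ_pow_succ hT' n j

end ExpPoly

theorem stirlingSecond_eq_zero_of_lt {n m : ℕ} (h : n < m) : stirlingSecond n m = 0 := by
  induction n generalizing m with
  | zero => obtain ⟨m, rfl⟩ := Nat.exists_eq_add_one_of_ne_zero h.ne'; rfl
  | succ n ih =>
    obtain ⟨m, rfl⟩ := Nat.exists_eq_add_one_of_ne_zero (Nat.ne_zero_of_lt h)
    rw [stirlingSecond, ih (by omega), ih (by omega), mul_zero, add_zero]

theorem map_sum_stirlingSecond_smul {M : Type*} [AddCommGroup M] [Module ℚ M] (D : M →ₗ[ℚ] M)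
    (f : ℕ → M) (c : ℚ) (hD : ∀ m, D (f m) = f (m + 1) + (c * m) • f m) (n : ℕ) :
    D (∑ m ∈ Finset.range (n + 1), (stirlingSecond n m * c ^ (n - m)) • f m)
      = ∑ m ∈ Finset.range (n + 2), (stirlingSecond (n + 1) m * c ^ (n + 1 - m)) • f m := by
  have hshift : ∑ m ∈ Finset.range (n + 1), (stirlingSecond n m * c ^ (n - m) * (c * m)) • f m
      = ∑ m ∈ Finset.range (n + 1),
          ((m + 1) * stirlingSecond n (m + 1) * c ^ (n - m)) • f (m + 1) := by
    rw [Finset.sum_range_succ' _ n, Finset.sum_range_succ _ n,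
      stirlingSecond_eq_zero_of_lt (Nat.lt_succ_self n)]
    simp only [Nat.cast_zero, mul_zero, zero_mul, zero_smul, add_zero]
    refine Finset.sum_congr rfl fun m hm => ?_
    rw [show n - m = n - (m + 1) + 1 by have := Finset.mem_range.mp hm; omega, pow_succ]
    push_cast
    ring_nf
  simp only [map_sum, map_smul, hD, smul_add, smul_smul, Finset.sum_add_distrib, hshift]
  rw [Finset.sum_range_succ' _ (n + 1)]
  simp only [stirlingSecond, Nat.add_sub_add_right, zero_mul, zero_smul, add_zero, add_mul,
    add_smul, Finset.sum_add_distrib]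

section Laguerre

open Polynomial

theorem coeff_laguerreL {m : ℕ} (hm : m ≠ 0) (k : ℕ) :
    (laguerreL m).coeff k = if k = 0 then 0 else
      (m.choose k : ℚ) * (-1) ^ (m - k) * ((m - 1).factorial : ℚ) / ((k - 1).factorial : ℚ) := by
  rw [laguerreL, if_neg hm, finsetSum_coeff]
  simp only [coeff_C_mul_X_pow, Finset.sum_ite_eq, Finset.mem_Icc]
  split_ifs with hk hk0 hk0
  · omega
  · rfl
  · rfl
  · rw [Nat.choose_eq_zero_of_lt (by omega), Nat.cast_zero, zero_mul, zero_mul, zero_div]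

theorem laguerreOp_laguerreL (m : ℕ) : laguerreOp m (laguerreL m) = 0 := by
  rcases eq_or_ne m 0 with rfl | hm
  · simp [laguerreOp_apply, laguerreL]
  ext k
  rcases k with _ | k
  · simp [coeff_laguerreOp_zero, coeff_laguerreL hm]
  rw [coeff_laguerreOp_succ, coeff_laguerreL hm, coeff_laguerreL hm, coeff_zero,
    if_neg (by omega), if_neg (by omega), Nat.add_sub_cancel, show k + 2 - 1 = k + 1 by omega]
  rcases lt_or_ge m (k + 2) with hlt | hle
  · rw [Nat.choose_eq_zero_of_lt hlt]
    rcases (show m = k + 1 ∨ m < k + 1 by omega) with rfl | hlt'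
    · push_cast; ring
    · simp [Nat.choose_eq_zero_of_lt hlt']
  · obtain ⟨d, rfl⟩ := Nat.exists_eq_add_of_le hle
    have hchoose : ((k + 2 + d).choose (k + 2) : ℚ) * (k + 2)
        = (k + 2 + d).choose (k + 1) * (d + 1) := by
      have h := Nat.choose_succ_right_eq (k + 2 + d) (k + 1)
      rw [show k + 2 + d - (k + 1) = d + 1 by omega] at h
      exact_mod_cast h
    rw [show k + 2 + d - (k + 1) = d + 1 by omega, show k + 2 + d - (k + 2) = d by omega,
      Nat.factorial_succ k]
    push_cast
    rw [pow_succ]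
    field_simp
    linear_combination (-1) ^ d * ((k + 2 + d - 1).factorial : ℚ) * hchoose

theorem coeff_one_laguerreL_succ (m : ℕ) :
    (laguerreL (m + 1)).coeff 1 = (laguerreL m).coeff 0 - (m + 1) * (laguerreL m).coeff 1 := by
  rw [coeff_laguerreL m.succ_ne_zero]
  rcases m with _ | m
  · simp [laguerreL, coeff_one]
  rw [coeff_laguerreL m.succ_ne_zero, coeff_laguerreL m.succ_ne_zero]
  simp only [one_ne_zero, if_false, if_true, Nat.choose_one_right, Nat.sub_self, Nat.factorial_zero]
  push_cast [Nat.add_sub_cancel, Nat.factorial_succ m]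
  ring

theorem tanhStep_laguerreL (m : ℕ) :
    tanhStep (laguerreL m) = laguerreL (m + 1) + (2 * m : ℚ) • laguerreL m := by
  rw [← sub_eq_iff_eq_add, ← sub_eq_zero]
  refine eq_zero_of_laguerreOp_eq_zero m.succ_ne_zero ?_ ?_
  · rw [map_sub, laguerreOp_succ_tanhStep_sub, laguerreOp_laguerreL, laguerreOp_laguerreL]
    simp
  · have hode := coeff_laguerreOp_succ m (laguerreL m) 0
    rw [laguerreOp_laguerreL, coeff_zero] at hode
    rw [coeff_sub, coeff_sub, coeff_tanhStep_succ, coeff_smul, coeff_one_laguerreL_succ,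
      smul_eq_mul]
    push_cast at hode ⊢
    linear_combination hode

end Laguerre

/-- Poisson subordination for the tanh system: the polynomials `q_n` with
EGF `exp(y tanh z)` (where `tanh` is the formal series `T` with `cosh · T = sinh`)
satisfy `q_n(y) = Σ_m S(n,m) 2^{n-m} L_m(y)`. -/
theorem tanh_poisson_subordination (T : PowerSeries ℚ) (hT : coshPS * T = sinhPS) :
    ∀ n : ℕ,
      (n.factorial : ℚ) • PowerSeries.coeff (R := Polynomial ℚ) n
          (expPS (PowerSeries.C (R := Polynomial ℚ) Polynomial.X *
            PowerSeries.map (Polynomial.C : ℚ →+* Polynomial ℚ) T))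
        = ∑ m ∈ Finset.range (n + 1),
            (stirlingSecond n m * 2 ^ (n - m)) • laguerreL m := by
  have hT0 := constantCoeff_eq_zero_of_coshPS_mul_eq hT
  have hT' := derivative_eq_one_sub_sq_of_coshPS_mul_eq hT
  intro n
  change egfExpPoly T n = _
  induction n with
  | zero => simp [egfExpPoly_zero hT0, stirlingSecond, laguerreL]
  | succ n ih =>
    rw [egfExpPoly_succ hT0 hT' n, ih,
      map_sum_stirlingSecond_smul tanhStep laguerreL 2 tanhStep_laguerreL n]
end
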